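/- An S₁×⋯×S_N-setting correlation scenario admits an LHV (local hidden variable) model if and only if there exists a probability measure μ' on the product measurable space Λ₁^{S₁}×⋯×Λ_N^{S_N} that returns all joint probability distributions P_{(s₁,…,s_N)} of the scenario as the corresponding marginals. -/

import Mathlib

open MeasureTheory ProbabilityTheory

namespace LqHV

/-- An `S₁ × ⋯ × S_N`-setting correlation scenario, given by its family of joint probability
distributions `P`, admits an LHV (local hidden variable) model: there are a measurable
space `Ω`, a probability measure `ν` on `Ω`, and Markov kernels `κ n s : Ω → Λ n` such that
every joint distribution factorizes on measurable rectangles as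
`P s (F₁ × ⋯ × F_N) = ∫ ∏ n, κ n (s n) ω (F n) dν(ω)`. -/
def AdmitsLHV {N : ℕ} {S : Fin N → ℕ} {Λ : Fin N → Type} [∀ n, MeasurableSpace (Λ n)]
    (P : (∀ n, Fin (S n)) → Measure (∀ n, Λ n)) : Prop :=
  ∃ (Ω : Type) (_ : MeasurableSpace Ω) (ν : Measure Ω) (_ : IsProbabilityMeasure ν)
    (κ : ∀ n, Fin (S n) → Kernel Ω (Λ n)),
    (∀ n s, IsMarkovKernel (κ n s)) ∧
    ∀ (s : ∀ n, Fin (S n)) (F : ∀ n, Set (Λ n)), (∀ n, MeasurableSet (F n)) →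
      (P s (Set.univ.pi F)).toReal =
        ∫ ω, ∏ n, (κ n (s n) ω (F n)).toReal ∂ν

end LqHV

/-!
A hidden-variable model `(ν, κ)` yields the probability measure `μ' = ∫ ⊗_{n,s} κ n s ω dν(ω)`
on `Λ₁^{S₁} × ⋯ × Λ_N^{S_N}`, whose marginal at `s` is `∫ ⊗_n κ n (s n) ω dν(ω)`. Conversely,
`μ'` itself serves as the hidden variable, with the deterministic responses `ω ↦ ω n s`.
Both directions rest on reading the factorisation on rectangles as the equality of measures
`P s = (⊗_n κ n (s n)) ∘ ν`, as finite measures on a finite product are determined by boxes.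
-/

open Set

namespace MeasureTheory.Measure

variable {ι : Type*} [Fintype ι] {X : ι → Type*} [∀ i, MeasurableSpace (X i)]

lemma ext_of_univ_pi {μ ν : Measure (∀ i, X i)} [IsFiniteMeasure μ]
    (h : ∀ F : ∀ i, Set (X i), (∀ i, MeasurableSet (F i)) → μ (univ.pi F) = ν (univ.pi F)) :
    μ = ν := by
  refine ext_of_generate_finite _ generateFrom_pi.symm isPiSystem_pi ?_ ?_
  · rintro _ ⟨F, hF, rfl⟩
    exact h F fun i => hF i (mem_univ i)
  · simpa using h (fun _ => univ) fun _ => .univ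

lemma pi_dirac (x : ∀ i, X i) : Measure.pi (fun i => dirac (x i)) = dirac x := by
  refine pi_eq fun F hF => ?_
  rw [dirac_apply' _ (.univ_pi hF), ← Finset.coe_univ, Set.indicator_pi_one_apply]
  simp [dirac_apply' _ (hF _)]

end MeasureTheory.Measure

namespace ProbabilityTheory.Kernel

variable {Ω : Type*} [MeasurableSpace Ω] {ι : Type*} [Fintype ι]
  {X : ι → Type*} [∀ i, MeasurableSpace (X i)]

lemma measurable_measure_pi (κ : ∀ i, Kernel Ω (X i)) [∀ i, IsFiniteKernel (κ i)] :
    Measurable fun ω => Measure.pi fun i => κ i ω := by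
  have h_box : ∀ F : ∀ i, Set (X i), (∀ i, MeasurableSet (F i)) →
      Measurable fun ω => Measure.pi (fun i => κ i ω) (univ.pi F) := fun F hF => by
    simp_rw [Measure.pi_pi]
    exact Finset.measurable_prod _ fun i _ => (κ i).measurable_coe (hF i)
  refine .measure_of_isPiSystem generateFrom_pi.symm isPiSystem_pi ?_ ?_
  · rintro _ ⟨F, hF, rfl⟩
    exact h_box F fun i => hF i (mem_univ i)
  · simpa using h_box (fun _ => univ) fun _ => .univ

noncomputable def pi (κ : ∀ i, Kernel Ω (X i)) [∀ i, IsFiniteKernel (κ i)] :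
    Kernel Ω (∀ i, X i) :=
  ⟨fun ω => Measure.pi fun i => κ i ω, measurable_measure_pi κ⟩

variable (κ : ∀ i, Kernel Ω (X i)) [∀ i, IsFiniteKernel (κ i)]

@[simp]
lemma pi_apply (ω : Ω) : pi κ ω = Measure.pi fun i => κ i ω := rfl

instance : IsFiniteKernel (pi κ) :=
  ⟨⟨∏ i, (κ i).bound, ENNReal.prod_lt_top fun i _ => (κ i).bound_lt_top, fun ω => by
    rw [pi_apply, Measure.pi_univ]
    exact Finset.prod_le_prod' fun i _ => (κ i).measure_le_bound ω univ⟩⟩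

instance [∀ i, IsMarkovKernel (κ i)] : IsMarkovKernel (pi κ) :=
  ⟨fun ω => by rw [pi_apply]; infer_instance⟩

lemma comp_pi_apply_univ_pi (ν : Measure Ω) {F : ∀ i, Set (X i)}
    (hF : ∀ i, MeasurableSet (F i)) :
    (pi κ ∘ₘ ν) (univ.pi F) = ∫⁻ ω, ∏ i, κ i ω (F i) ∂ν := by
  simp [Measure.bind_apply (.univ_pi hF) (pi κ).aemeasurable]

lemma integral_prod_toReal_eq (ν : Measure Ω) {F : ∀ i, Set (X i)}
    (hF : ∀ i, MeasurableSet (F i)) :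
    ∫ ω, ∏ i, (κ i ω (F i)).toReal ∂ν = ((pi κ ∘ₘ ν) (univ.pi F)).toReal := by
  simp_rw [← ENNReal.toReal_prod]
  rw [comp_pi_apply_univ_pi κ ν hF, integral_toReal]
  · exact (Finset.measurable_prod _ fun i _ => (κ i).measurable_coe (hF i)).aemeasurable
  · exact .of_forall fun ω => ENNReal.prod_lt_top fun i _ => measure_lt_top _ _

lemma eq_comp_pi_iff (μ : Measure (∀ i, X i)) [IsFiniteMeasure μ] (ν : Measure Ω)
    [IsFiniteMeasure ν] :
    μ = pi κ ∘ₘ ν ↔ ∀ F : ∀ i, Set (X i), (∀ i, MeasurableSet (F i)) →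
      (μ (univ.pi F)).toReal = ∫ ω, ∏ i, (κ i ω (F i)).toReal ∂ν := by
  refine ⟨fun h F hF => by rw [h, integral_prod_toReal_eq κ ν hF], fun h => ?_⟩
  refine Measure.ext_of_univ_pi fun F hF => ?_
  rw [← ENNReal.toReal_eq_toReal_iff' (measure_ne_top _ _) (measure_ne_top _ _),
    h F hF, integral_prod_toReal_eq κ ν hF]

lemma map_pi_pi_eval {J : ι → Type*} [∀ i, Fintype (J i)] (κ : ∀ i, J i → Kernel Ω (X i))
    [∀ i j, IsMarkovKernel (κ i j)] (s : ∀ i, J i) :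
    (pi fun i => pi (κ i)).map (fun x i => x i (s i)) = pi fun i => κ i (s i) := by
  ext1 ω
  rw [map_apply _ (by fun_prop)]
  exact (measurePreserving_pi _ _ fun i => measurePreserving_eval _ (s i)).map_eq

lemma pi_deterministic {f : ∀ i, Ω → X i} (hf : ∀ i, Measurable (f i)) :
    pi (fun i => deterministic (f i) (hf i)) =
      deterministic (fun ω i => f i ω) (measurable_pi_lambda _ hf) := by
  ext1 ω
  simp only [pi_apply, deterministic_apply, Measure.pi_dirac]

end ProbabilityTheory.Kernel

namespace LqHV

lemma admitsLHV_iff_exists_comp_pi {N : ℕ} {S : Fin N → ℕ} {Λ : Fin N → Type}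
    [∀ n, MeasurableSpace (Λ n)] (P : (∀ n, Fin (S n)) → Measure (∀ n, Λ n))
    [∀ s, IsFiniteMeasure (P s)] :
    AdmitsLHV P ↔ ∃ (Ω : Type) (_ : MeasurableSpace Ω) (ν : Measure Ω)
      (_ : IsProbabilityMeasure ν) (κ : ∀ n, Fin (S n) → Kernel Ω (Λ n))
      (_ : ∀ n s, IsMarkovKernel (κ n s)), ∀ s, P s = Kernel.pi (fun n => κ n (s n)) ∘ₘ ν := by
  refine exists_congr fun Ω => exists_congr fun _ => exists_congr fun ν =>
    exists_congr fun _ => exists_congr fun κ => ⟨?_, ?_⟩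
  · rintro ⟨hκ, hP⟩
    exact ⟨hκ, fun s => (Kernel.eq_comp_pi_iff _ (P s) ν).2 (hP s)⟩
  · rintro ⟨hκ, hP⟩
    exact ⟨hκ, fun s => (Kernel.eq_comp_pi_iff _ (P s) ν).1 (hP s)⟩

end LqHV

open LqHV in
theorem lhv_model_iff_probability_measure_general
    {N : ℕ} {S : Fin N → ℕ}
    {Λ : Fin N → Type} [∀ n, MeasurableSpace (Λ n)]
    (P : (∀ n, Fin (S n)) → Measure (∀ n, Λ n)) [∀ s, IsProbabilityMeasure (P s)] :
    AdmitsLHV P ↔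
      ∃ μ' : Measure (∀ n, Fin (S n) → Λ n),
        IsProbabilityMeasure μ' ∧
        ∀ s : ∀ n, Fin (S n),
          μ'.map (fun ω n => ω n (s n)) = P s := by
  rw [admitsLHV_iff_exists_comp_pi]
  constructor
  · rintro ⟨Ω, _, ν, _, κ, _, hP⟩
    refine ⟨Kernel.pi (fun n => Kernel.pi (κ n)) ∘ₘ ν, inferInstance, fun s => ?_⟩
    rw [Measure.map_comp _ _ (by fun_prop), Kernel.map_pi_pi_eval, hP]
  · rintro ⟨μ', hμ', hmarg⟩
    refine ⟨_, inferInstance, μ', hμ', fun n j => Kernel.deterministic (fun ω => ω n j)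
      (by fun_prop), fun _ _ => inferInstance, fun s => ?_⟩
    rw [Kernel.pi_deterministic, Measure.deterministic_comp_eq_map, hmarg]

open LqHV in
/-- **Corollary 1 (LHV modelling criterion).** An `S₁ × ⋯ × S_N`-setting correlation scenario
admits an LHV model if and only if there exists a probability measure `μ'` on the product
space `Λ₁^{S₁} × ⋯ × Λ_N^{S_N}` returning all joint probability distributions
`P_{(s₁,…,s_N)}` of the scenario as the corresponding marginals. -/
theorem lhv_model_iff_probability_measure
    {N : ℕ} (hN : 2 ≤ N) {S : Fin N → ℕ} (hS : ∀ n, 1 ≤ S n)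
    {Λ : Fin N → Type} [∀ n, MeasurableSpace (Λ n)]
    (P : (∀ n, Fin (S n)) → Measure (∀ n, Λ n)) [∀ s, IsProbabilityMeasure (P s)] :
    AdmitsLHV P ↔
      ∃ μ' : Measure (∀ n, Fin (S n) → Λ n),
        IsProbabilityMeasure μ' ∧
        ∀ s : ∀ n, Fin (S n),
          μ'.map (fun ω n => ω n (s n)) = P s :=
  lhv_model_iff_probability_measure_general P
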